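/- arXiv:2103.05887 — 2 statements merged into one kernel-verified Lean document; each statement's English description precedes it below -/
import Mathlib

section
/- For every p > 1, ω > 0, and q ≥ 1, the identity ∫_ℝ R_ω(x)^q ∂_ω R_ω(x) dx = (2q - p + 3)/(2(p-1)(q+1)) · ω^{-1} ∫_ℝ R_ω(x)^{q+1} dx holds. -/
/-!
The soliton is a rescaling of a fixed profile, `R_ω(x) = ω^{1/(p-1)} R_1(√ω x)`, so
`∂_ω R_ω = (R_ω / (p-1) + x ∂_x R_ω / 2) / ω`. Multiplying by `R_ω^q` turns the second term into
`x ∂_x (R_ω^{q+1}) / (2(q+1))`, and integrating by parts (`∫ x F' = -∫ F`, justified by the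
exponential decay of `R_ω` and `∂_x R_ω = -√ω tanh(…) R_ω`) leaves the coefficient
`1/(p-1) - 1/(2(q+1))`.
-/

open Real MeasureTheory

/-- The line soliton `R_ω(x) = ω^{1/(p-1)} ((p+1)/2)^{1/(p-1)} sech^{2/(p-1)}((p-1)/2 √ω x)`. -/
noncomputable def soliton (p ω x : ℝ) : ℝ :=
  ω ^ (1 / (p - 1)) * ((p + 1) / 2) ^ (1 / (p - 1)) *
    (1 / Real.cosh ((p - 1) / 2 * Real.sqrt ω * x)) ^ (2 / (p - 1))

open Set

lemma integrable_comp_abs_of_integrableOn_Ioi {f : ℝ → ℝ} (hf : IntegrableOn f (Ioi 0)) :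
    Integrable fun x => f |x| := by
  have hIoi : IntegrableOn (fun x => f |x|) (Ioi 0) :=
    hf.congr_fun (fun x hx => by rw [abs_of_pos hx]) measurableSet_Ioi
  have hIic : IntegrableOn (fun x => f |x|) (Iic 0) := by
    let m : MeasurableEmbedding fun x : ℝ => -x := (Homeomorph.neg ℝ).measurableEmbedding
    rw [← Measure.map_neg_eq_self (volume : Measure ℝ), m.integrableOn_map_iff]
    simp_rw [Function.comp_def, abs_neg, neg_preimage, neg_Iic, neg_zero]
    exact (integrableOn_Ici_iff_integrableOn_Ioi).mpr hIoi
  have h := hIic.union hIoi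
  rwa [Iic_union_Ioi, integrableOn_univ] at h

lemma integrable_abs_pow_mul_exp_neg_mul_abs {b : ℝ} (hb : 0 < b) (n : ℕ) :
    Integrable fun x : ℝ => |x| ^ n * exp (-b * |x|) := by
  refine integrable_comp_abs_of_integrableOn_Ioi (f := fun x => x ^ n * exp (-b * x)) ?_
  refine (integrableOn_rpow_mul_exp_neg_mul_rpow (s := n) (p := 1)
    (neg_one_lt_zero.trans_le n.cast_nonneg) one_pos hb).congr_fun (fun x _ => ?_)
    measurableSet_Ioi
  simp [rpow_natCast]

lemma integrable_pow_mul_of_abs_le_mul_exp_neg_mul_abs {g : ℝ → ℝ} {C b : ℝ} (hb : 0 < b)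
    (hg : AEStronglyMeasurable g) (hbound : ∀ x, |g x| ≤ C * exp (-b * |x|)) (n : ℕ) :
    Integrable fun x => x ^ n * g x := by
  refine ((integrable_abs_pow_mul_exp_neg_mul_abs hb n).const_mul C).mono'
    ((continuous_pow n).aestronglyMeasurable.mul hg) (ae_of_all _ fun x => ?_)
  rw [norm_mul, norm_pow, Real.norm_eq_abs, Real.norm_eq_abs, mul_left_comm]
  exact mul_le_mul_of_nonneg_left (hbound x) (by positivity)

lemma integral_mul_deriv_eq_neg_integral {F : ℝ → ℝ} (hF : Differentiable ℝ F)
    (hFi : Integrable F) (hxF : Integrable fun x => x * F x)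
    (hxF' : Integrable fun x => x * deriv F x) :
    ∫ x, x * deriv F x = -∫ x, F x := by
  have h := integral_eq_zero_of_hasDerivAt_of_integrable (f' := fun x => F x + x * deriv F x)
    (fun x => by simpa using (hasDerivAt_id' x).fun_mul (hF x).hasDerivAt) (hFi.add hxF') hxF
  rw [integral_add hFi hxF'] at h
  linarith

lemma one_div_cosh_le_two_mul_exp_neg_abs (u : ℝ) : 1 / cosh u ≤ 2 * exp (-|u|) := by
  have h : exp |u| / 2 ≤ cosh u := by
    rw [← cosh_abs, cosh_eq]
    linarith [exp_pos (-|u|)]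
  calc 1 / cosh u ≤ 1 / (exp |u| / 2) := one_div_le_one_div_of_le (by positivity) h
    _ = 2 * exp (-|u|) := by rw [exp_neg]; field_simp

lemma hasDerivAt_one_div_cosh_mul_rpow (c s x : ℝ) :
    HasDerivAt (fun y => (1 / cosh (c * y)) ^ s)
      (-(c * s) * tanh (c * x) * (1 / cosh (c * x)) ^ s) x := by
  have hcosh := (cosh_pos (c * x)).ne'
  have h := (((hasDerivAt_id' x).const_mul c).cosh.inv hcosh).rpow_const (p := s)
    (Or.inl (inv_ne_zero hcosh))
  convert h using 1
  · simp
  simp only [Pi.inv_apply, one_div]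
  rw [rpow_sub_one (inv_ne_zero hcosh), tanh_eq_sinh_div_cosh]
  field_simp

lemma hasDerivAt_rpow_mul_comp_sqrt_mul {S : ℝ → ℝ} {a ω x : ℝ} (hω : 0 < ω)
    (hS : DifferentiableAt ℝ S (√ω * x)) :
    HasDerivAt (fun w => w ^ a * S (√w * x))
      ((a * (ω ^ a * S (√ω * x)) + x * deriv (fun y => ω ^ a * S (√ω * y)) x / 2) / ω) ω := by
  have h := (hasDerivAt_rpow_const (p := a) (Or.inl hω.ne')).fun_mul
    (hS.hasDerivAt.comp ω ((hasDerivAt_sqrt hω.ne').mul_const x))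
  rw [deriv_const_mul_field, deriv_comp_mul_left (f := S), smul_eq_mul]
  refine h.congr_deriv ?_
  have hsq : √ω ^ 2 = ω := sq_sqrt hω.le
  rw [Function.comp_apply, rpow_sub_one hω.ne']
  generalize deriv S (√ω * x) = d
  field_simp
  linear_combination (-(x * d)) * hsq

lemma soliton_eq_rpow_mul_soliton_one (p ω x : ℝ) :
    soliton p ω x = ω ^ (1 / (p - 1)) * soliton p 1 (√ω * x) := by
  simp only [soliton, sqrt_one, one_rpow, one_mul, mul_one, mul_assoc]

lemma soliton_pos {p ω : ℝ} (hp : -1 < p) (hω : 0 < ω) (x : ℝ) : 0 < soliton p ω x := by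
  have : 0 < (p + 1) / 2 := by linarith
  have := cosh_pos ((p - 1) / 2 * √ω * x)
  unfold soliton
  positivity

lemma hasDerivAt_soliton {p : ℝ} (hp : p ≠ 1) (ω x : ℝ) :
    HasDerivAt (soliton p ω) (-(√ω * tanh ((p - 1) / 2 * √ω * x)) * soliton p ω x) x := by
  have h := (hasDerivAt_one_div_cosh_mul_rpow ((p - 1) / 2 * √ω) (2 / (p - 1)) x).const_mul
    (ω ^ (1 / (p - 1)) * ((p + 1) / 2) ^ (1 / (p - 1)))
  have hc : (p - 1) / 2 * √ω * (2 / (p - 1)) = √ω := by field_simp [sub_ne_zero.mpr hp]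
  rw [hc] at h
  refine h.congr_deriv ?_
  simp only [soliton]
  ring

lemma hasDerivAt_soliton_omega {p ω : ℝ} (hp : p ≠ 1) (hω : 0 < ω) (x : ℝ) :
    HasDerivAt (fun w => soliton p w x)
      ((soliton p ω x / (p - 1) + x * deriv (soliton p ω) x / 2) / ω) ω := by
  have h := hasDerivAt_rpow_mul_comp_sqrt_mul (a := 1 / (p - 1)) hω
    (hasDerivAt_soliton hp 1 (√ω * x)).differentiableAt
  simp only [← soliton_eq_rpow_mul_soliton_one] at h
  convert h using 2
  ring

lemma abs_deriv_soliton_le {p ω : ℝ} (hp : 1 < p) (hω : 0 < ω) (x : ℝ) :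
    |deriv (soliton p ω) x| ≤ √ω * soliton p ω x := by
  have hR := soliton_pos (by linarith : -1 < p) hω x
  rw [(hasDerivAt_soliton hp.ne' ω x).deriv, abs_mul, abs_neg, abs_mul,
    abs_of_nonneg (sqrt_nonneg ω), abs_of_pos hR, mul_assoc]
  exact mul_le_mul_of_nonneg_left (mul_le_of_le_one_left hR.le (abs_tanh_lt_one _).le)
    (sqrt_nonneg ω)

lemma soliton_le {p ω : ℝ} (hp : 1 < p) (hω : 0 < ω) (x : ℝ) :
    soliton p ω x ≤ ω ^ (1 / (p - 1)) * ((p + 1) / 2) ^ (1 / (p - 1)) * 2 ^ (2 / (p - 1)) *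
      exp (-(√ω * |x|)) := by
  have hp1 : 0 < p - 1 := by linarith
  have hp2 : 0 < (p + 1) / 2 := by linarith
  set u := (p - 1) / 2 * √ω * x
  have h := rpow_le_rpow (by have := cosh_pos u; positivity)
    (one_div_cosh_le_two_mul_exp_neg_abs u) (z := 2 / (p - 1)) (by positivity)
  have hu : -|u| * (2 / (p - 1)) = -(√ω * |x|) := by
    rw [abs_mul, abs_mul, abs_of_pos (by positivity : 0 < (p - 1) / 2),
      abs_of_nonneg (sqrt_nonneg ω)]
    field_simp
  rw [mul_rpow two_pos.le (exp_pos _).le, ← exp_mul, hu] at h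
  calc soliton p ω x = ω ^ (1 / (p - 1)) * ((p + 1) / 2) ^ (1 / (p - 1)) *
      (1 / cosh u) ^ (2 / (p - 1)) := rfl
    _ ≤ ω ^ (1 / (p - 1)) * ((p + 1) / 2) ^ (1 / (p - 1)) *
      (2 ^ (2 / (p - 1)) * exp (-(√ω * |x|))) := by gcongr
    _ = _ := by ring

lemma exists_soliton_rpow_le {p ω r : ℝ} (hp : 1 < p) (hω : 0 < ω) (hr : 0 ≤ r) :
    ∃ C, ∀ x, soliton p ω x ^ r ≤ C * exp (-(r * √ω) * |x|) := by
  refine ⟨(ω ^ (1 / (p - 1)) * ((p + 1) / 2) ^ (1 / (p - 1)) * 2 ^ (2 / (p - 1))) ^ r,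
    fun x => ?_⟩
  have hp2 : 0 < (p + 1) / 2 := by linarith
  calc soliton p ω x ^ r
      ≤ (ω ^ (1 / (p - 1)) * ((p + 1) / 2) ^ (1 / (p - 1)) * 2 ^ (2 / (p - 1)) *
          exp (-(√ω * |x|))) ^ r :=
        rpow_le_rpow (soliton_pos (by linarith : -1 < p) hω x).le (soliton_le hp hω x) hr
    _ = _ := by
        rw [mul_rpow (by positivity) (exp_pos _).le, ← exp_mul]
        ring_nf

lemma hasDerivAt_soliton_rpow {p ω : ℝ} (hp : 1 < p) (hω : 0 < ω) (r x : ℝ) :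
    HasDerivAt (fun y => soliton p ω y ^ r)
      (r * soliton p ω x ^ (r - 1) * deriv (soliton p ω) x) x := by
  have h := (hasDerivAt_soliton hp.ne' ω x).differentiableAt.hasDerivAt.rpow_const (p := r)
    (Or.inl (soliton_pos (by linarith : -1 < p) hω x).ne')
  exact h.congr_deriv (by ring)

lemma abs_deriv_soliton_rpow_le {p ω r : ℝ} (hp : 1 < p) (hω : 0 < ω) (hr : 0 ≤ r) (x : ℝ) :
    |deriv (fun y => soliton p ω y ^ r) x| ≤ r * √ω * soliton p ω x ^ r := by
  have hR := soliton_pos (by linarith : -1 < p) hω x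
  have hc : 0 ≤ r * soliton p ω x ^ (r - 1) := mul_nonneg hr (rpow_nonneg hR.le _)
  rw [(hasDerivAt_soliton_rpow hp hω r x).deriv, abs_mul, abs_of_nonneg hc]
  calc r * soliton p ω x ^ (r - 1) * |deriv (soliton p ω) x|
      ≤ r * soliton p ω x ^ (r - 1) * (√ω * soliton p ω x) :=
        mul_le_mul_of_nonneg_left (abs_deriv_soliton_le hp hω x) hc
    _ = r * √ω * soliton p ω x ^ r := by
        rw [rpow_sub_one hR.ne']
        field_simp

lemma integrable_pow_mul_soliton_rpow {p ω r : ℝ} (hp : 1 < p) (hω : 0 < ω) (hr : 0 < r)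
    (n : ℕ) : Integrable fun x => x ^ n * soliton p ω x ^ r := by
  obtain ⟨C, hC⟩ := exists_soliton_rpow_le hp hω hr.le
  refine integrable_pow_mul_of_abs_le_mul_exp_neg_mul_abs (C := C)
    (mul_pos hr (sqrt_pos.mpr hω)) (Differentiable.continuous fun x =>
      (hasDerivAt_soliton_rpow hp hω r x).differentiableAt).aestronglyMeasurable (fun x => ?_) n
  rw [abs_of_pos (rpow_pos_of_pos (soliton_pos (by linarith : -1 < p) hω x) r)]
  exact hC x

lemma integrable_soliton_rpow {p ω r : ℝ} (hp : 1 < p) (hω : 0 < ω) (hr : 0 < r) :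
    Integrable fun x => soliton p ω x ^ r := by
  simpa using integrable_pow_mul_soliton_rpow hp hω hr 0

lemma integrable_mul_deriv_soliton_rpow {p ω r : ℝ} (hp : 1 < p) (hω : 0 < ω) (hr : 0 < r) :
    Integrable fun x => x * deriv (fun y => soliton p ω y ^ r) x := by
  obtain ⟨C, hC⟩ := exists_soliton_rpow_le hp hω hr.le
  have hb := mul_pos hr (sqrt_pos.mpr hω)
  have hbound (x : ℝ) : |deriv (fun y => soliton p ω y ^ r) x| ≤
      r * √ω * C * exp (-(r * √ω) * |x|) := by
    rw [mul_assoc _ C]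
    exact (abs_deriv_soliton_rpow_le hp hω hr.le x).trans
      (mul_le_mul_of_nonneg_left (hC x) hb.le)
  simpa using integrable_pow_mul_of_abs_le_mul_exp_neg_mul_abs hb
    (measurable_deriv _).aestronglyMeasurable hbound 1

lemma integral_mul_deriv_soliton_rpow {p ω r : ℝ} (hp : 1 < p) (hω : 0 < ω) (hr : 0 < r) :
    ∫ x, x * deriv (fun y => soliton p ω y ^ r) x = -∫ x, soliton p ω x ^ r :=
  integral_mul_deriv_eq_neg_integral
    (fun x => (hasDerivAt_soliton_rpow hp hω r x).differentiableAt)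
    (integrable_soliton_rpow hp hω hr)
    (by simpa using integrable_pow_mul_soliton_rpow hp hω hr 1)
    (integrable_mul_deriv_soliton_rpow hp hω hr)

lemma soliton_rpow_mul_deriv_omega {p ω q : ℝ} (hp : 1 < p) (hω : 0 < ω) (hq : q + 1 ≠ 0)
    (x : ℝ) :
    soliton p ω x ^ q * deriv (fun w => soliton p w x) ω =
      ω⁻¹ * ((p - 1)⁻¹ * soliton p ω x ^ (q + 1) +
        (2 * (q + 1))⁻¹ * (x * deriv (fun y => soliton p ω y ^ (q + 1)) x)) := by
  have hp1 : p - 1 ≠ 0 := by linarith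
  rw [(hasDerivAt_soliton_omega hp.ne' hω x).deriv, (hasDerivAt_soliton_rpow hp hω _ x).deriv,
    add_sub_cancel_right, rpow_add_one (soliton_pos (by linarith : -1 < p) hω x).ne']
  field_simp

theorem soliton_int_pow_mul_deriv_omega (p ω q : ℝ) (hp : 1 < p) (hω : 0 < ω) (hq : 1 ≤ q) :
    ∫ x : ℝ, soliton p ω x ^ q * deriv (fun w => soliton p w x) ω =
      (2 * q - p + 3) / (2 * (p - 1) * (q + 1)) * ω⁻¹ * ∫ x : ℝ, soliton p ω x ^ (q + 1) := by
  have hq1 : 0 < q + 1 := by linarith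
  have hp1 : p - 1 ≠ 0 := by linarith
  simp_rw [soliton_rpow_mul_deriv_omega hp hω hq1.ne']
  rw [integral_const_mul, integral_add ((integrable_soliton_rpow hp hω hq1).const_mul _)
      ((integrable_mul_deriv_soliton_rpow hp hω hq1).const_mul _),
    integral_const_mul, integral_const_mul, integral_mul_deriv_soliton_rpow hp hω hq1]
  field_simp
  ring
end

section
/- For every p > 1, ω > 0, and r > 1, the integral identity ∫_ℝ R_ω(x)^{p+r} dx = ((p+1)(r+1))/(2r + p + 1) · ω · ∫_ℝ R_ω(x)^{r+1} dx holds. -/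
open Real MeasureTheory

/-! With `A = ω (p+1)/2` and `k = (p-1)√ω/2` we have `R_ω^e = A^{e/(p-1)} sech^{2e/(p-1)}(k x)`,
so after the substitution `y = k x` both sides are multiples of `∫ sech^s` with `s = c + 2` on the
left and `s = c` on the right, where `c = 2(r+1)/(p-1)`. These are linked by the reduction formula
`(c+1) ∫ sech^{c+2} = c ∫ sech^c`: the function `sinh · sech^{c+1}` is integrable and has derivative
`(c+1) sech^{c+2} - c sech^c`, so the integral of the latter vanishes. -/

open Filter Set

namespace Real

lemma exp_div_two_le_cosh (x : ℝ) : exp x / 2 ≤ cosh x := by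
  rw [cosh_eq]
  linarith [exp_pos (-x)]

lemma abs_sinh_le_cosh (x : ℝ) : |sinh x| ≤ cosh x := by
  refine abs_le.2 ⟨neg_le.1 ?_, (sinh_lt_cosh x).le⟩
  simpa using (sinh_lt_cosh (-x)).le

lemma continuous_cosh_rpow (s : ℝ) : Continuous fun x ↦ cosh x ^ s :=
  continuous_cosh.rpow_const fun x ↦ Or.inl (cosh_pos x).ne'

lemma cosh_rpow_neg_le {c : ℝ} (hc : 0 ≤ c) (x : ℝ) :
    cosh x ^ (-c) ≤ 2 ^ c * exp (-c * x) := by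
  calc cosh x ^ (-c) ≤ (exp x / 2) ^ (-c) :=
        rpow_le_rpow_of_nonpos (by positivity) (exp_div_two_le_cosh x) (by linarith)
    _ = 2 ^ c * exp (-c * x) := by
        rw [div_rpow (exp_pos x).le zero_le_two, ← exp_mul, rpow_neg zero_le_two, div_inv_eq_mul,
          mul_comm, mul_comm x]

lemma integrable_cosh_rpow_neg {c : ℝ} (hc : 0 < c) :
    Integrable fun x ↦ cosh x ^ (-c) := by
  refine LocallyIntegrable.integrable_of_isBigO_atTop_of_norm_isNegInvariant
    (continuous_cosh_rpow _).locallyIntegrable (g := fun x ↦ exp (-c * x)) (Eventually.of_forall fun x ↦ by simp) ?_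
    ⟨Ioi 0, Ioi_mem_atTop 0, exp_neg_integrableOn_Ioi 0 hc⟩
  refine Asymptotics.IsBigO.of_bound (2 ^ c) (Eventually.of_forall fun x ↦ ?_)
  rw [norm_of_nonneg (rpow_nonneg (cosh_pos x).le _), norm_of_nonneg (exp_pos _).le]
  exact cosh_rpow_neg_le hc.le x

lemma hasDerivAt_sinh_mul_cosh_rpow_neg (c x : ℝ) :
    HasDerivAt (fun x ↦ sinh x * cosh x ^ (-(c + 1)))
      ((c + 1) * cosh x ^ (-(c + 2)) - c * cosh x ^ (-c)) x := by
  have hx := cosh_pos x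
  refine ((hasDerivAt_sinh x).mul
    ((hasDerivAt_cosh x).rpow_const (p := -(c + 1)) (Or.inl hx.ne'))).congr_deriv ?_
  have e1 : cosh x ^ (-c) = cosh x * cosh x ^ (-(c + 1)) := by
    rw [show -c = 1 + -(c + 1) by ring, rpow_add hx, rpow_one]
  have e2 : cosh x ^ 2 * cosh x ^ (-(c + 2)) = cosh x ^ (-c) := by
    rw [← rpow_natCast, ← rpow_add hx]; norm_num
  rw [show -(c + 1) - 1 = -(c + 2) by ring]
  linear_combination -e1 - (c + 1) * e2 + (c + 1) * cosh x ^ (-(c + 2)) * cosh_sq x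

lemma integrable_sinh_mul_cosh_rpow_neg {c : ℝ} (hc : 0 < c) :
    Integrable fun x ↦ sinh x * cosh x ^ (-(c + 1)) := by
  refine (integrable_cosh_rpow_neg hc).mono
    (continuous_sinh.mul (continuous_cosh_rpow _)).aestronglyMeasurable
    (Eventually.of_forall fun x ↦ ?_)
  have hx := cosh_pos x
  rw [norm_mul, norm_of_nonneg (rpow_nonneg hx.le _), norm_of_nonneg (rpow_nonneg hx.le _),
    show -c = 1 + -(c + 1) by ring, rpow_add hx, rpow_one]
  exact mul_le_mul_of_nonneg_right (abs_sinh_le_cosh x) (rpow_nonneg hx.le _)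

lemma integral_cosh_rpow_neg_add_two {c : ℝ} (hc : 0 < c) :
    ∫ x, cosh x ^ (-(c + 2)) = c / (c + 1) * ∫ x, cosh x ^ (-c) := by
  have h0 := (integrable_cosh_rpow_neg hc).const_mul c
  have h2 := (integrable_cosh_rpow_neg (c := c + 2) (by linarith)).const_mul (c + 1)
  have key := integral_eq_zero_of_hasDerivAt_of_integrable
    (hasDerivAt_sinh_mul_cosh_rpow_neg c) (h2.sub h0) (integrable_sinh_mul_cosh_rpow_neg hc)
  rw [integral_sub h2 h0, integral_const_mul, integral_const_mul, sub_eq_zero] at key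
  rw [div_mul_eq_mul_div, eq_div_iff (by positivity)]
  linarith

end Real

lemma soliton_rpow {p ω : ℝ} (hp : -1 ≤ p) (hω : 0 ≤ ω) (e x : ℝ) :
    soliton p ω x ^ e = (ω * ((p + 1) / 2)) ^ (e / (p - 1)) *
      cosh ((p - 1) / 2 * √ω * x) ^ (-(2 / (p - 1) * e)) := by
  have hcosh := cosh_pos ((p - 1) / 2 * √ω * x)
  have hA : 0 ≤ ω * ((p + 1) / 2) := mul_nonneg hω (by linarith)
  rw [soliton, ← mul_rpow hω (by linarith), one_div (cosh _), inv_rpow hcosh.le,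
    ← rpow_neg hcosh.le, mul_rpow (rpow_nonneg hA _) (rpow_nonneg hcosh.le _), ← rpow_mul hA,
    ← rpow_mul hcosh.le, one_div_mul_eq_div, neg_mul]

lemma integral_soliton_rpow {p ω : ℝ} (hp : -1 ≤ p) (hω : 0 ≤ ω) (e : ℝ) :
    ∫ x, soliton p ω x ^ e = (ω * ((p + 1) / 2)) ^ (e / (p - 1)) *
      (|((p - 1) / 2 * √ω)⁻¹| * ∫ y, cosh y ^ (-(2 / (p - 1) * e))) := by
  simp_rw [soliton_rpow hp hω e]
  rw [integral_const_mul, Measure.integral_comp_mul_left (fun y ↦ cosh y ^ (-(2 / (p - 1) * e))),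
    smul_eq_mul]

theorem soliton_int_pow_identity (p ω r : ℝ) (hp : 1 < p) (hω : 0 < ω) (hr : 1 < r) :
    ∫ x : ℝ, soliton p ω x ^ (p + r) =
      (p + 1) * (r + 1) / (2 * r + p + 1) * ω * ∫ x : ℝ, soliton p ω x ^ (r + 1) := by
  have hp1 : p - 1 ≠ 0 := by linarith
  set c := 2 / (p - 1) * (r + 1) with hc
  have hc_pos : 0 < c := by positivity
  have hexp : 2 / (p - 1) * (p + r) = c + 2 := by rw [hc]; field_simp; ring
  have hA : (ω * ((p + 1) / 2)) ^ ((p + r) / (p - 1)) =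
      (ω * ((p + 1) / 2)) ^ ((r + 1) / (p - 1)) * (ω * ((p + 1) / 2)) := by
    rw [← rpow_add_one (by positivity)]
    congr 1
    field_simp
    ring
  have hratio : c / (c + 1) = 2 * (r + 1) / (2 * r + p + 1) := by
    rw [div_eq_div_iff (by positivity) (by linarith), hc]
    field_simp
    ring
  rw [integral_soliton_rpow (by linarith) hω.le, integral_soliton_rpow (by linarith) hω.le, hexp,
    integral_cosh_rpow_neg_add_two hc_pos, hA, ← hc, hratio]
  ring
end
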